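/- arXiv:2306.09614 — 2 statements merged into one kernel-verified Lean document; each statement's English description precedes it below -/
import Mathlib

section
/- For every node i, if 0 ≤ S i j ≤ 1 for all j, i ∉ N_u(i), and i ∉ N_v(i), then the GRACE denominator dominates the HomoGCL denominator: exp(θ(u i)(v i)/τ) + Σ_{j ≠ i} exp(θ(u i)(v j)/τ) + Σ_{j ≠ i} exp(θ(u i)(u j)/τ) ≥ pos(u,v,i) + neg(u,v,i), where pos(u,v,i) = exp(θ(u i)(v i)/τ) + Σ_{j ∈ N_u(i)} exp(θ(u i)(u j)/τ)·S i j and neg(u,v,i) = Σ_{j ∉ {i} ∪ N_v(i)} exp(θ(u i)(v j)/τ) + Σ_{j ∉ {i} ∪ N_u(i)} exp(θ(u i)(u j)/τ). -/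
/-- The HomoGCL positive term for node `i` (view order `u, v`, neighbor set `Nu`). -/
noncomputable def posTerm {N d' : ℕ} (u v : Fin N → EuclideanSpace ℝ (Fin d'))
    (θ : EuclideanSpace ℝ (Fin d') → EuclideanSpace ℝ (Fin d') → ℝ) (τ : ℝ)
    (S : Fin N → Fin N → ℝ) (Nu : Fin N → Finset (Fin N)) (i : Fin N) : ℝ :=
  Real.exp (θ (u i) (v i) / τ) + ∑ j ∈ Nu i, Real.exp (θ (u i) (u j) / τ) * S i j

/-- The HomoGCL negative term for node `i` (view order `u, v`, neighbor sets `Nu`, `Nv`). -/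
noncomputable def negTerm {N d' : ℕ} (u v : Fin N → EuclideanSpace ℝ (Fin d'))
    (θ : EuclideanSpace ℝ (Fin d') → EuclideanSpace ℝ (Fin d') → ℝ) (τ : ℝ)
    (Nu Nv : Fin N → Finset (Fin N)) (i : Fin N) : ℝ :=
  ∑ j ∈ Finset.univ \ insert i (Nv i), Real.exp (θ (u i) (v j) / τ) +
    ∑ j ∈ Finset.univ \ insert i (Nu i), Real.exp (θ (u i) (u j) / τ)

/-!
The GRACE denominator sums `exp(θ(uᵢ, ·)/τ)` over all `j ≠ i` in both views. HomoGCL keeps the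
inter-view terms only off `Nᵥ(i)`, which drops nonnegative terms, and splits the intra-view terms
into the neighbours `j ∈ Nᵤ(i)`, reweighted by saliencies `S i j ≤ 1`, and the rest. Since
`i ∉ Nᵤ(i)`, both parts lie inside `j ≠ i`, so each HomoGCL sum is bounded by its GRACE counterpart.
-/

namespace Finset

variable {ι : Type*} [DecidableEq ι]

theorem sum_mul_add_sum_sdiff_le {s t : Finset ι} {f w : ι → ℝ} (hts : t ⊆ s)
    (hf : ∀ j ∈ t, 0 ≤ f j) (hw : ∀ j ∈ t, w j ≤ 1) :
    ∑ j ∈ t, f j * w j + ∑ j ∈ s \ t, f j ≤ ∑ j ∈ s, f j := by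
  have hweighted : ∑ j ∈ t, f j * w j ≤ ∑ j ∈ t, f j :=
    sum_le_sum fun j hj => mul_le_of_le_one_right (hf j hj) (hw j hj)
  linarith [sum_sdiff hts (f := f)]

theorem sum_mul_add_sum_sdiff_insert_le [Fintype ι] {t : Finset ι} {i : ι} (hi : i ∉ t)
    {f w : ι → ℝ} (hf : ∀ j ∈ t, 0 ≤ f j) (hw : ∀ j ∈ t, w j ≤ 1) :
    ∑ j ∈ t, f j * w j + ∑ j ∈ univ \ insert i t, f j ≤ ∑ j ∈ univ \ {i}, f j := by
  rw [insert_eq, ← sup_eq_union, ← sdiff_sdiff_left]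
  exact sum_mul_add_sum_sdiff_le (subset_sdiff.2 ⟨subset_univ t, disjoint_singleton_right.2 hi⟩)
    hf hw

theorem sum_sdiff_insert_le_sum_sdiff_singleton [Fintype ι] {f : ι → ℝ} (hf : ∀ j, 0 ≤ f j)
    (i : ι) (t : Finset ι) : ∑ j ∈ univ \ insert i t, f j ≤ ∑ j ∈ univ \ {i}, f j :=
  sum_le_sum_of_subset_of_nonneg
    (sdiff_subset_sdiff subset_rfl (singleton_subset_iff.2 (mem_insert_self i t)))
    fun j _ _ => hf j

end Finset

theorem grace_denom_ge_homogcl_denom_general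
    (N d' : ℕ)
    (u v : Fin N → EuclideanSpace ℝ (Fin d'))
    (θ : EuclideanSpace ℝ (Fin d') → EuclideanSpace ℝ (Fin d') → ℝ)
    (τ : ℝ)
    (S : Fin N → Fin N → ℝ)
    (Nu Nv : Fin N → Finset (Fin N))
    (i : Fin N)
    (hS : ∀ j, 0 ≤ S i j ∧ S i j ≤ 1)
    (hNu : i ∉ Nu i) :
    Real.exp (θ (u i) (v i) / τ) +
        ∑ j ∈ Finset.univ \ {i}, Real.exp (θ (u i) (v j) / τ) +
        ∑ j ∈ Finset.univ \ {i}, Real.exp (θ (u i) (u j) / τ) ≥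
      posTerm u v θ τ S Nu i + negTerm u v θ τ Nu Nv i := by
  have hinter := Finset.sum_sdiff_insert_le_sum_sdiff_singleton
    (fun j => (Real.exp_pos (θ (u i) (v j) / τ)).le) i (Nv i)
  have hintra := Finset.sum_mul_add_sum_sdiff_insert_le hNu
    (fun j _ => (Real.exp_pos (θ (u i) (u j) / τ)).le) (fun j _ => (hS j).2)
  unfold posTerm negTerm
  linarith

/-- the GRACE denominator dominates the HomoGCL denominator. -/
theorem grace_denom_ge_homogcl_denom
    (N d' : ℕ) (hN : 1 ≤ N) (hd' : 1 ≤ d')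
    (u v : Fin N → EuclideanSpace ℝ (Fin d'))
    (θ : EuclideanSpace ℝ (Fin d') → EuclideanSpace ℝ (Fin d') → ℝ)
    (τ : ℝ) (hτ : 0 < τ)
    (S : Fin N → Fin N → ℝ)
    (Nu Nv : Fin N → Finset (Fin N))
    (i : Fin N)
    (hS : ∀ j, 0 ≤ S i j ∧ S i j ≤ 1)
    (hNu : i ∉ Nu i) (hNv : i ∉ Nv i) :
    Real.exp (θ (u i) (v i) / τ) +
        ∑ j ∈ Finset.univ \ {i}, Real.exp (θ (u i) (v j) / τ) +
        ∑ j ∈ Finset.univ \ {i}, Real.exp (θ (u i) (u j) / τ) ≥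
      posTerm u v θ τ S Nu i + negTerm u v θ τ Nu Nv i :=
  grace_denom_ge_homogcl_denom_general N d' u v θ τ S Nu Nv i hS hNu
end

section
/- For every node i, if 0 ≤ S i j ≤ 1 for all j, i ∉ N_u(i), and i ∉ N_v(i), then the GRACE per-node loss is at most the HomoGCL per-node loss: ℓ(u_i, v_i) ≤ ℓ_cont(u_i, v_i), i.e. log( exp(θ(u i)(v i)/τ) / ( exp(θ(u i)(v i)/τ) + Σ_{j ≠ i} exp(θ(u i)(v j)/τ) + Σ_{j ≠ i} exp(θ(u i)(u j)/τ) ) ) ≤ log( pos(u,v,i) / (pos(u,v,i) + neg(u,v,i)) ). -/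
/-!
HomoGCL moves the intra-view neighbours `j ∈ N_u(i)` from the GRACE denominator into the
numerator, where they only count with weight `S i j ∈ [0, 1]`, and drops the inter-view
neighbours `N_v(i)` altogether. So the numerator can only grow (`a ≤ pos`) while the
denominator can only shrink (`pos + neg ≤ D`), and `a / D ≤ pos / (pos + neg)`.
-/

open Finset

theorem Finset.sum_mul_add_sum_sdiff_le_s2 {ι R : Type*} [DecidableEq ι] [CommSemiring R]
    [PartialOrder R] [IsOrderedRing R] {s t : Finset ι} {f w : ι → R} (hst : s ⊆ t)
    (hf : ∀ j ∈ s, 0 ≤ f j) (hw : ∀ j ∈ s, w j ≤ 1) :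
    ∑ j ∈ s, f j * w j + ∑ j ∈ t \ s, f j ≤ ∑ j ∈ t, f j := by
  rw [← sum_sdiff hst, add_comm]
  gcongr with j hj
  exact mul_le_of_le_one_right (hf j hj) (hw j hj)

theorem Real.log_div_le_log_div_add {a p n D : ℝ} (ha : 0 < a) (hap : a ≤ p) (hn : 0 ≤ n)
    (hD : p + n ≤ D) : Real.log (a / D) ≤ Real.log (p / (p + n)) := by
  have hpn : 0 < p + n := by linarith
  exact Real.log_le_log (div_pos ha (hpn.trans_le hD)) (div_le_div₀ (ha.le.trans hap) hap hpn hD)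

section HomoGCL

variable {N d' : ℕ} (u v : Fin N → EuclideanSpace ℝ (Fin d'))
  (θ : EuclideanSpace ℝ (Fin d') → EuclideanSpace ℝ (Fin d') → ℝ) (τ : ℝ)
  {S : Fin N → Fin N → ℝ} {Nu : Fin N → Finset (Fin N)} {i : Fin N}

theorem exp_le_posTerm (hS : ∀ j, 0 ≤ S i j) :
    Real.exp (θ (u i) (v i) / τ) ≤ posTerm u v θ τ S Nu i :=
  le_add_of_nonneg_right <| sum_nonneg fun j _ => mul_nonneg (Real.exp_pos _).le (hS j)

theorem negTerm_nonneg (Nv : Fin N → Finset (Fin N)) : 0 ≤ negTerm u v θ τ Nu Nv i := by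
  unfold negTerm
  positivity

theorem posTerm_add_negTerm_le (Nv : Fin N → Finset (Fin N)) (hS : ∀ j, 0 ≤ S i j ∧ S i j ≤ 1)
    (hNu : i ∉ Nu i) :
    posTerm u v θ τ S Nu i + negTerm u v θ τ Nu Nv i ≤
      Real.exp (θ (u i) (v i) / τ) +
        ∑ j ∈ univ \ {i}, Real.exp (θ (u i) (v j) / τ) +
        ∑ j ∈ univ \ {i}, Real.exp (θ (u i) (u j) / τ) := by
  have hNu_sub : Nu i ⊆ univ \ {i} := fun j hj ↦
    mem_sdiff.2 ⟨mem_univ j, fun hji ↦ hNu (mem_singleton.1 hji ▸ hj)⟩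
  have hu : ∑ j ∈ Nu i, Real.exp (θ (u i) (u j) / τ) * S i j +
      ∑ j ∈ univ \ insert i (Nu i), Real.exp (θ (u i) (u j) / τ) ≤
        ∑ j ∈ univ \ {i}, Real.exp (θ (u i) (u j) / τ) := by
    rw [insert_eq, ← sup_eq_union, ← sdiff_sdiff_left]
    exact sum_mul_add_sum_sdiff_le_s2 hNu_sub (fun j _ ↦ (Real.exp_pos _).le) fun j _ ↦ (hS j).2
  have hv : ∑ j ∈ univ \ insert i (Nv i), Real.exp (θ (u i) (v j) / τ) ≤
      ∑ j ∈ univ \ {i}, Real.exp (θ (u i) (v j) / τ) :=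
    sum_le_sum_of_subset_of_nonneg (sdiff_subset_sdiff subset_rfl (singleton_subset_iff.2
      (mem_insert_self i _))) fun j _ _ ↦ (Real.exp_pos _).le
  unfold posTerm negTerm
  linarith

end HomoGCL

theorem grace_loss_le_homogcl_loss_general
    (N d' : ℕ)
    (u v : Fin N → EuclideanSpace ℝ (Fin d'))
    (θ : EuclideanSpace ℝ (Fin d') → EuclideanSpace ℝ (Fin d') → ℝ)
    (τ : ℝ)
    (S : Fin N → Fin N → ℝ)
    (Nu Nv : Fin N → Finset (Fin N))
    (i : Fin N)
    (hS : ∀ j, 0 ≤ S i j ∧ S i j ≤ 1)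
    (hNu : i ∉ Nu i) :
    Real.log (Real.exp (θ (u i) (v i) / τ) /
        (Real.exp (θ (u i) (v i) / τ) +
          ∑ j ∈ Finset.univ \ {i}, Real.exp (θ (u i) (v j) / τ) +
          ∑ j ∈ Finset.univ \ {i}, Real.exp (θ (u i) (u j) / τ))) ≤
      Real.log (posTerm u v θ τ S Nu i /
        (posTerm u v θ τ S Nu i + negTerm u v θ τ Nu Nv i)) :=
  Real.log_div_le_log_div_add (Real.exp_pos _) (exp_le_posTerm u v θ τ fun j ↦ (hS j).1)
    (negTerm_nonneg u v θ τ Nv) (posTerm_add_negTerm_le u v θ τ Nv hS hNu)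

/-- the GRACE per-node loss is at most the HomoGCL per-node loss,
`ℓ(u_i, v_i) ≤ ℓ_cont(u_i, v_i)`. -/
theorem grace_loss_le_homogcl_loss
    (N d' : ℕ) (hN : 1 ≤ N) (hd' : 1 ≤ d')
    (u v : Fin N → EuclideanSpace ℝ (Fin d'))
    (θ : EuclideanSpace ℝ (Fin d') → EuclideanSpace ℝ (Fin d') → ℝ)
    (τ : ℝ) (hτ : 0 < τ)
    (S : Fin N → Fin N → ℝ)
    (Nu Nv : Fin N → Finset (Fin N))
    (i : Fin N)
    (hS : ∀ j, 0 ≤ S i j ∧ S i j ≤ 1)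
    (hNu : i ∉ Nu i) (hNv : i ∉ Nv i) :
    Real.log (Real.exp (θ (u i) (v i) / τ) /
        (Real.exp (θ (u i) (v i) / τ) +
          ∑ j ∈ Finset.univ \ {i}, Real.exp (θ (u i) (v j) / τ) +
          ∑ j ∈ Finset.univ \ {i}, Real.exp (θ (u i) (u j) / τ))) ≤
      Real.log (posTerm u v θ τ S Nu i /
        (posTerm u v θ τ S Nu i + negTerm u v θ τ Nu Nv i)) :=
  grace_loss_le_homogcl_loss_general N d' u v θ τ S Nu Nv i hS hNu
end
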